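/- arXiv:2504.08513 — 2 statements merged into one kernel-verified Lean document; each statement's English description precedes it below -/
import Mathlib

section
/- Let X be a locally compact, separable, metrizable space and Y a Polish space. The Borel σ-algebra of C(X,Y) with the compact-open topology equals the trace on C(X,Y) of the product σ-algebra on Y^X, i.e., the σ-algebra generated by the point-evaluation maps π_x(f) = f(x). -/
/-!
Evaluations are continuous, so they are Borel measurable. Conversely, `C(X, Y)` is second
countable, so its Borel σ-algebra is generated by the subbasic sets `{f | MapsTo f K U}`. Every
open `U ⊆ Y` is the union of the closed sets `Fₙ = {y | 1/n ≤ d(y, Uᶜ)}`, and each compact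
subset of `U` already lies in one `Fₙ`; with a countable dense `c ⊆ K` this gives
`{f | MapsTo f K U} = ⋃ n, ⋂ x ∈ c, {f | f x ∈ Fₙ}`, a countable combination of evaluation
cylinders.
-/

open TopologicalSpace MeasureTheory Set Metric

theorem IsOpen.exists_isClosed_seq_absorbing_isCompact {Y : Type*} [TopologicalSpace Y]
    [PseudoMetrizableSpace Y] {U : Set Y} (hU : IsOpen U) :
    ∃ F : ℕ → Set Y, (∀ n, IsClosed (F n)) ∧ (∀ n, F n ⊆ U) ∧
      ∀ L, IsCompact L → L ⊆ U → ∃ n, L ⊆ F n := by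
  let := pseudoMetrizableSpacePseudoMetric Y
  refine ⟨fun n => (infEDist · Uᶜ) ⁻¹' Ici (n : ENNReal)⁻¹,
    fun n => isClosed_Ici.preimage continuous_infEDist, fun n y hy => ?_,
    fun L hL hLU => ?_⟩
  · by_contra hyU
    exact (ENNReal.inv_pos.2 (ENNReal.natCast_ne_top n)).not_ge
      (le_of_le_of_eq hy (infEDist_zero_of_mem hyU))
  · have hcover : L ⊆ ⋃ n : ℕ, (infEDist · Uᶜ) ⁻¹' Ioi (n : ENNReal)⁻¹ :=
      fun y hy => mem_iUnion.2 (ENNReal.exists_inv_nat_lt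
        ((mem_iff_infEDist_zero_of_closed hU.isClosed_compl).not.1 (notMem_compl_iff.2 (hLU hy))))
    obtain ⟨n, hn⟩ := hL.elim_directed_cover _
      (fun n => isOpen_Ioi.preimage continuous_infEDist) hcover
      (Monotone.directed_le fun m n hmn => preimage_mono (Ioi_subset_Ioi
        (ENNReal.inv_le_inv.2 (Nat.cast_le.2 hmn))))
    exact ⟨n, hn.trans (preimage_mono Ioi_subset_Ici_self)⟩

namespace ContinuousMap

variable {X Y : Type*} [TopologicalSpace X] [TopologicalSpace Y]

theorem setOf_mapsTo_eq_biInter_eval {c K : Set X} (hcK : c ⊆ K) (hKc : K ⊆ closure c)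
    {F : Set Y} (hF : IsClosed F) :
    {f : C(X, Y) | MapsTo f K F} = ⋂ x ∈ c, (fun f : C(X, Y) => f x) ⁻¹' F := by
  ext f
  simp only [mem_ofPred_eq, mem_iInter, mem_preimage]
  exact ⟨fun hf x hx => hf (hcK hx),
    fun hf => (MapsTo.closure_left hf f.continuous hF).mono_left hKc⟩

theorem setOf_mapsTo_eq_iUnion {K : Set X} (hK : IsCompact K) {U : Set Y} {F : ℕ → Set Y}
    (hFU : ∀ n, F n ⊆ U) (hF : ∀ L, IsCompact L → L ⊆ U → ∃ n, L ⊆ F n) :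
    {f : C(X, Y) | MapsTo f K U} = ⋃ n, {f : C(X, Y) | MapsTo f K (F n)} := by
  ext f
  simp only [mem_ofPred_eq, mem_iUnion, mapsTo_iff_image_subset]
  exact ⟨fun hf => hF _ (hK.image f.continuous) hf, fun ⟨n, hn⟩ => hn.trans (hFU n)⟩

variable (X Y) [MeasurableSpace Y]

abbrev evalMeasurableSpace : MeasurableSpace C(X, Y) :=
  ⨆ x : X, MeasurableSpace.comap (fun f : C(X, Y) => f x) inferInstance

variable {X Y}

theorem measurable_eval_evalMeasurableSpace (x : X) :
    Measurable[evalMeasurableSpace X Y] fun f : C(X, Y) => f x :=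
  measurable_iff_comap_le.2 (le_iSup_of_le x le_rfl)

theorem evalMeasurableSpace_le_borel [BorelSpace Y] :
    evalMeasurableSpace X Y ≤ borel C(X, Y) :=
  iSup_le fun x => ((continuous_eval_const x).borel_measurable.mono le_rfl
    BorelSpace.measurable_eq.le).comap_le

theorem measurableSet_setOf_mapsTo [PseudoMetrizableSpace X] [PseudoMetrizableSpace Y]
    [OpensMeasurableSpace Y] {K : Set X} (hK : IsCompact K) {U : Set Y} (hU : IsOpen U) :
    MeasurableSet[evalMeasurableSpace X Y] {f : C(X, Y) | MapsTo f K U} := by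
  obtain ⟨F, hF_closed, hFU, hF⟩ := hU.exists_isClosed_seq_absorbing_isCompact
  obtain ⟨c, hcK, hc, hKc⟩ := hK.isSeparable.exists_countable_dense_subset
  rw [setOf_mapsTo_eq_iUnion hK hFU hF]
  refine MeasurableSet.iUnion fun n => ?_
  rw [setOf_mapsTo_eq_biInter_eval hcK hKc (hF_closed n)]
  exact .biInter hc fun x _ => measurable_eval_evalMeasurableSpace x (hF_closed n).measurableSet

end ContinuousMap

/-- For `X` locally compact, separable, metrizable and `Y` Polish, the Borel σ-algebra of
`C(X, Y)` with the compact-open topology equals the σ-algebra generated by the point-evaluation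
maps `f ↦ f x`, i.e. the trace of the product σ-algebra on `Y ^ X`. -/
theorem borel_continuousMap_eq_comap_eval (X Y : Type*)
    [TopologicalSpace X] [LocallyCompactSpace X] [SeparableSpace X] [MetrizableSpace X]
    [TopologicalSpace Y] [PolishSpace Y] [MeasurableSpace Y] [BorelSpace Y] :
    borel C(X, Y) = ⨆ x : X, MeasurableSpace.comap (fun f : C(X, Y) => f x) inferInstance := by
  have : SecondCountableTopology X := by
    let := metrizableSpaceMetric X
    exact UniformSpace.secondCountable_of_separable X
  refine le_antisymm ?_ ContinuousMap.evalMeasurableSpace_le_borel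
  rw [borel_eq_generateFrom_of_subbasis ContinuousMap.compactOpen_eq]
  refine MeasurableSpace.generateFrom_le ?_
  rintro _ ⟨K, hK, U, hU, rfl⟩
  exact ContinuousMap.measurableSet_setOf_mapsTo hK hU
end

section
/- Let F be a random continuous function in C(X,Y) with X locally compact separable metrizable and Y Polish, Z a random element of a standard Borel space E, G a sub-σ-algebra, and let κ_{Z,F|G} be a regular conditional distribution of (Z,F) given G. Define κ(ω,x)(B) = ∫ 1_B(z, f(x)) κ_{Z,F|G}(ω)(dz⊗df). Then for every ω, the map x ↦ κ(ω,x)(·) is continuous from X to the space of probability measures on E × Y with the weak topology. -/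
open TopologicalSpace MeasureTheory

/-- Weak continuity of the evaluated joint conditional distribution: let `ρ ω` be (the value
at `ω` of) a regular conditional distribution of `(Z, F)` given `G`, a probability measure on
`E × C(X, Y)`.  Define `κ ω x` as the pushforward of `ρ ω` under `(z, f) ↦ (z, f x)`.  Then
for every `ω`, the map `x ↦ κ ω x` is continuous into the probability measures on `E × Y`
with the weak topology. -/
theorem weak_continuity_of_evaluated_kernel {Ω X Y E : Type*} [MeasurableSpace Ω]
    [TopologicalSpace X] [LocallyCompactSpace X] [SeparableSpace X] [MetrizableSpace X]
    [TopologicalSpace Y] [PolishSpace Y] [MeasurableSpace Y] [BorelSpace Y]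
    [TopologicalSpace E] [PolishSpace E] [MeasurableSpace E] [BorelSpace E]
    [MeasurableSpace C(X, Y)] [BorelSpace C(X, Y)]
    (ρ : Ω → Measure (E × C(X, Y))) (hρ : ∀ ω, IsProbabilityMeasure (ρ ω))
    (κ : Ω → X → ProbabilityMeasure (E × Y))
    (hκ : ∀ ω x, (κ ω x : Measure (E × Y))
      = Measure.map (fun p : E × C(X, Y) => (p.1, p.2 x)) (ρ ω)) :
    ∀ ω, Continuous (κ ω) := by
  intro ω
  have := hρ ω
  rw [continuous_iff_continuousAt]
  intro x₀
  rw [ContinuousAt, ProbabilityMeasure.tendsto_iff_forall_integral_tendsto]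
  intro f
  have hmeas : ∀ x : X, Measurable (fun p : E × C(X, Y) => (p.1, p.2 x)) := fun x =>
    measurable_fst.prodMk ((continuous_eval_const x).measurable.comp
      measurable_snd)
  have hint : ∀ x : X, ∫ p, f p ∂(κ ω x : Measure (E × Y))
      = ∫ p : E × C(X, Y), f (p.1, p.2 x) ∂(ρ ω) := by
    intro x
    rw [hκ, integral_map (hmeas x).aemeasurable f.continuous.aestronglyMeasurable]
  simp_rw [hint]
  refine tendsto_integral_filter_of_dominated_convergence (fun _ => ‖f‖)
    (Filter.Eventually.of_forall fun x =>
      (f.continuous.comp ((continuous_fst.prodMk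
        ((continuous_eval_const x).comp continuous_snd))) :
        Continuous fun p : E × C(X, Y) => f (p.1, p.2 x)).aestronglyMeasurable)
    (Filter.Eventually.of_forall fun x => Filter.Eventually.of_forall fun p =>
      f.norm_coe_le_norm _)
    (integrable_const _)
    (Filter.Eventually.of_forall fun p => ?_)
  exact (f.continuous.tendsto _).comp
    ((tendsto_const_nhds.prodMk_nhds (p.2.continuous.tendsto x₀)))
end
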